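/- arXiv:math/0506083 — 3 statements merged into one kernel-verified Lean document; each statement's English description precedes it below -/
import Mathlib

section
/- Let k be a positive integer, let l and δ be divisors of k, and let ζ be a primitive δ-th root of unity. Then the sum of ζ^r over all r with 0 ≤ r < k and gcd(r,k) = l equals c(k,l,δ) := (φ(k/l)/φ(δ/gcd(δ,l))) · μ(δ/gcd(δ,l)), where φ is Euler's totient function and μ is the Möbius function. -/
/-!
Write `r = l s`. The condition `gcd(r, k) = l` becomes `gcd(s, k/l) = 1`, so the sum runs over the
residues `s` prime to `m = k/l` of `η^s`, where `η = ζ^l` is a primitive `d`-th root of unity with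
`d = δ / gcd(δ, l)`, and `d ∣ m`. Since `η^s` only depends on `s mod d` and reduction
`(ℤ/m)ˣ → (ℤ/d)ˣ` is surjective with fibres of size `φ(m)/φ(d)`, the sum is `φ(m)/φ(d)` times the
sum of the primitive `d`-th roots of unity. That sum is `μ(d)`: expand
`[gcd(t, d) = 1] = ∑_{e ∣ gcd(t, d)} μ(e)`, and note that the sum of `η^t` over the multiples `t < d`
of `e` vanishes unless `e = d`.
-/

open Finset

theorem ArithmeticFunction.sum_divisors_moebius {R : Type*} [Ring R] (n : ℕ) :
    ∑ e ∈ n.divisors, (moebius e : R) = if n = 1 then 1 else 0 := by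
  rw [← one_apply, ← coe_moebius_mul_coe_zeta, coe_mul_zeta_apply]
  simp only [intCoe_apply]

section Reindex

variable {M : Type*} [AddCommMonoid M] (f : ℕ → M)

theorem sum_range_filter_of_dvd (p : ℕ → Prop) [DecidablePred p] {k l : ℕ} (hl : l ∣ k)
    (hp : ∀ r, p r → l ∣ r) :
    ∑ r ∈ range k with p r, f r = ∑ s ∈ range (k / l) with p (l * s), f (l * s) := by
  obtain rfl | hl0 := l.eq_zero_or_pos
  · simp [Nat.eq_zero_of_zero_dvd hl]
  symm
  refine sum_nbij' (l * ·) (· / l) ?_ ?_ ?_ ?_ (fun _ _ => rfl)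
  · intro s hs
    simp only [mem_filter, mem_range] at hs ⊢
    exact ⟨(Nat.lt_div_iff_mul_lt' hl _).1 hs.1, hs.2⟩
  · intro r hr
    simp only [mem_filter, mem_range] at hr ⊢
    rw [Nat.mul_div_cancel' (hp r hr.2)]
    exact ⟨Nat.div_lt_div_of_lt_of_dvd hl hr.1, hr.2⟩
  · intro s _
    exact Nat.mul_div_cancel_left s hl0
  · intro r hr
    exact Nat.mul_div_cancel' (hp r (mem_filter.1 hr).2)

theorem sum_range_filter_dvd {d e : ℕ} (he : e ∣ d) :
    ∑ t ∈ range d with e ∣ t, f t = ∑ j ∈ range (d / e), f (e * j) := by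
  rw [sum_range_filter_of_dvd f _ he fun _ => id,
    filter_true_of_mem fun j _ => dvd_mul_right e j]

theorem sum_range_filter_gcd_eq {k l : ℕ} (hl : l ∣ k) (hl0 : l ≠ 0) :
    ∑ r ∈ range k with r.gcd k = l, f r =
      ∑ s ∈ range (k / l) with s.Coprime (k / l), f (l * s) := by
  rw [sum_range_filter_of_dvd f (·.gcd k = l) hl fun r hr => hr ▸ Nat.gcd_dvd_left r k]
  congr 1
  refine filter_congr fun s _ => ?_
  conv_lhs => rw [← Nat.mul_div_cancel' hl, Nat.gcd_mul_left]
  exact mul_eq_left₀ hl0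

theorem ZMod.sum_units_eq_sum_range_coprime (n : ℕ) [NeZero n] :
    ∑ u : (ZMod n)ˣ, f (u : ZMod n).val = ∑ s ∈ range n with s.Coprime n, f s := by
  refine sum_nbij' (fun u => (u : ZMod n).val)
    (fun s => if h : s.Coprime n then ZMod.unitOfCoprime s h else 1) ?_ ?_ ?_ ?_ (fun _ _ => rfl)
  · intro u _
    simp only [mem_filter, mem_range]
    exact ⟨ZMod.val_lt _, ZMod.val_coe_unit_coprime u⟩
  · intro s _
    exact mem_univ _
  · intro u _
    ext
    rw [dif_pos (ZMod.val_coe_unit_coprime u), ZMod.coe_unitOfCoprime, ZMod.natCast_zmod_val]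
  · intro s hs
    obtain ⟨hs, hcop⟩ := mem_filter.1 hs
    rw [dif_pos hcop, ZMod.coe_unitOfCoprime, ZMod.val_natCast, Nat.mod_eq_of_lt (mem_range.1 hs)]

end Reindex

theorem MonoidHom.sum_comp_of_surjective {G H M : Type*} [Group G] [Fintype G] [Group H]
    [Fintype H] [AddCommMonoid M] (π : G →* H) (hπ : Function.Surjective π) (F : H → M) :
    ∑ g, F (π g) = Nat.card π.ker • ∑ h, F h := by
  classical
  have hfiber (h : H) : #{g | π g = h} = Nat.card π.ker := by
    rw [card_fiber_eq_of_mem_range π (hπ h) ⟨1, map_one π⟩, ← Fintype.card_subtype,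
      ← Nat.card_eq_fintype_card]
    rfl
  rw [sum_comp, image_univ_of_surjective hπ, smul_sum]
  simp_rw [hfiber]

theorem MonoidHom.card_ker_mul_card_of_surjective {G H : Type*} [Group G] [Group H]
    (π : G →* H) (hπ : Function.Surjective π) : Nat.card π.ker * Nat.card H = Nat.card G := by
  rw [← π.ker.card_mul_index, Subgroup.index_ker, π.range_eq_top.2 hπ, Subgroup.card_top]

theorem ZMod.card_ker_unitsMap {m d : ℕ} [NeZero m] (hdm : d ∣ m) :
    Nat.card (ZMod.unitsMap hdm).ker = m.totient / d.totient := by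
  have : NeZero d := ⟨ne_zero_of_dvd_ne_zero (NeZero.ne m) hdm⟩
  refine Nat.eq_div_of_mul_eq_left (Nat.totient_pos.2 (Nat.pos_of_neZero d)).ne' ?_
  simpa only [Nat.card_eq_fintype_card, ZMod.card_units_eq_totient] using
    (ZMod.unitsMap hdm).card_ker_mul_card_of_surjective (ZMod.unitsMap_surjective hdm)

theorem pow_val_cast_eq_pow_val {M : Type*} [Monoid M] {η : M} {d m : ℕ} [NeZero m]
    (hη : η ^ d = 1) (x : ZMod m) : η ^ (ZMod.cast x : ZMod d).val = η ^ x.val := by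
  rw [ZMod.cast_eq_val, ZMod.val_natCast, ← pow_eq_pow_mod _ hη]

theorem IsPrimitiveRoot.pow_div_gcd {M : Type*} [CommMonoid M] {ζ : M} {k l : ℕ}
    (h : IsPrimitiveRoot ζ k) (hl : l ≠ 0) : IsPrimitiveRoot (ζ ^ l) (k / k.gcd l) :=
  IsPrimitiveRoot.iff_orderOf.2 (h.eq_orderOf ▸ orderOf_pow' ζ hl)

namespace IsPrimitiveRoot

variable {R : Type*} [CommRing R] [IsDomain R] {η : R} {d : ℕ}

theorem sum_pow_filter_dvd (hη : IsPrimitiveRoot η d) {e : ℕ} (he : e ∈ d.divisors) :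
    ∑ t ∈ range d with e ∣ t, η ^ t = if e = d then 1 else 0 := by
  obtain ⟨he, hd⟩ := Nat.mem_divisors.1 he
  have hprim : IsPrimitiveRoot (η ^ e) (d / e) :=
    hη.pow (Nat.pos_of_ne_zero hd) (Nat.mul_div_cancel' he).symm
  simp_rw [sum_range_filter_dvd _ he, pow_mul]
  split_ifs with hed
  · simp [hed, Nat.div_self (Nat.pos_of_ne_zero hd)]
  · refine hprim.geom_sum_eq_zero ((Nat.lt_div_iff_mul_lt' he 1).2 ?_)
    rw [mul_one]
    exact lt_of_le_of_ne (Nat.le_of_dvd (Nat.pos_of_ne_zero hd) he) hed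

theorem sum_pow_filter_coprime (hη : IsPrimitiveRoot η d) :
    ∑ t ∈ range d with t.Coprime d, η ^ t = ArithmeticFunction.moebius d := by
  obtain rfl | hd := d.eq_zero_or_pos
  · simp
  calc ∑ t ∈ range d with t.Coprime d, η ^ t
      = ∑ t ∈ range d, ∑ e ∈ d.divisors,
          if e ∣ t then (ArithmeticFunction.moebius e : R) * η ^ t else 0 := by
        rw [sum_filter]
        refine sum_congr rfl fun t _ => ?_
        have hdiv : {e ∈ d.divisors | e ∣ t} = (t.gcd d).divisors := by
          ext e
          simp [Nat.dvd_gcd_iff, hd.ne', and_comm]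
        rw [← sum_filter, ← sum_mul, hdiv, ArithmeticFunction.sum_divisors_moebius,
          ite_mul, one_mul, zero_mul]
    _ = ∑ e ∈ d.divisors, (ArithmeticFunction.moebius e : R) * ∑ t ∈ range d with e ∣ t, η ^ t := by
        rw [sum_comm]
        simp_rw [mul_sum, sum_filter]
    _ = ArithmeticFunction.moebius d := by
        rw [sum_congr rfl fun e he => by rw [sum_pow_filter_dvd hη he]]
        simp [Nat.mem_divisors_self d hd.ne']

theorem sum_pow_filter_coprime_of_dvd (hη : IsPrimitiveRoot η d) {m : ℕ} (hm : m ≠ 0)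
    (hdm : d ∣ m) :
    ∑ s ∈ range m with s.Coprime m, η ^ s =
      (m.totient / d.totient) • (ArithmeticFunction.moebius d : R) := by
  have : NeZero m := ⟨hm⟩
  have : NeZero d := ⟨ne_zero_of_dvd_ne_zero hm hdm⟩
  calc ∑ s ∈ range m with s.Coprime m, η ^ s
      = ∑ u : (ZMod m)ˣ, η ^ (ZMod.unitsMap hdm u : ZMod d).val := by
        rw [← ZMod.sum_units_eq_sum_range_coprime]
        simp only [ZMod.unitsMap_val, pow_val_cast_eq_pow_val hη.pow_eq_one]
    _ = Nat.card (ZMod.unitsMap hdm).ker • ∑ v : (ZMod d)ˣ, η ^ (v : ZMod d).val :=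
        (ZMod.unitsMap hdm).sum_comp_of_surjective (ZMod.unitsMap_surjective hdm)
          fun v => η ^ (v : ZMod d).val
    _ = (m.totient / d.totient) • (ArithmeticFunction.moebius d : R) := by
        rw [ZMod.card_ker_unitsMap, ZMod.sum_units_eq_sum_range_coprime,
          hη.sum_pow_filter_coprime]

end IsPrimitiveRoot

theorem Nat.div_gcd_dvd_div {k l δ : ℕ} (hl : l ∣ k) (hδ : δ ∣ k) : δ / δ.gcd l ∣ k / l := by
  rw [Nat.dvd_div_iff_mul_dvd hl, ← Nat.mul_div_assoc _ (Nat.gcd_dvd_left δ l), Nat.gcd_comm]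
  exact Nat.lcm_dvd hl hδ

/-- For `l, δ` divisors of `k` and `ζ` a primitive `δ`-th root of unity,
`∑_{0 ≤ r < k, gcd(r,k) = l} ζ^r = (φ(k/l)/φ(δ/gcd(δ,l))) · μ(δ/gcd(δ,l))`. -/
theorem sum_primitive_root_gcd_eq (k l δ : ℕ) (hk : 0 < k) (hl : l ∣ k) (hδ : δ ∣ k)
    (ζ : ℂ) (hζ : IsPrimitiveRoot ζ δ) :
    ∑ r ∈ (Finset.range k).filter (fun r => Nat.gcd r k = l), ζ ^ r =
      ((Nat.totient (k / l) : ℂ) / (Nat.totient (δ / Nat.gcd δ l) : ℂ)) *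
        ((ArithmeticFunction.moebius (δ / Nat.gcd δ l) : ℤ) : ℂ) := by
  have hl0 : l ≠ 0 := ne_zero_of_dvd_ne_zero hk.ne' hl
  have hdvd : δ / δ.gcd l ∣ k / l := Nat.div_gcd_dvd_div hl hδ
  have hm : k / l ≠ 0 := Nat.div_ne_zero_iff.2 ⟨hl0, Nat.le_of_dvd hk hl⟩
  have hφ : ((δ / δ.gcd l).totient : ℂ) ≠ 0 :=
    Nat.cast_ne_zero.2 (Nat.totient_pos.2 (Nat.pos_of_dvd_of_pos hdvd (Nat.pos_of_ne_zero hm))).ne'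
  simp_rw [sum_range_filter_gcd_eq _ hl hl0, pow_mul,
    (hζ.pow_div_gcd hl0).sum_pow_filter_coprime_of_dvd hm hdvd, nsmul_eq_mul,
    Nat.cast_div (Nat.totient_dvd_of_dvd hdvd) hφ]
end

section
/- Let k ≥ 1 and let M_1, ..., M_d, h, g, n satisfy M_r ∣ k, 1 ≤ M_r < k, h ≥ 0, and 2g - 1 + n = k(2h - 1 + n + d) - Σ_r M_r (the Riemann–Hurwitz constraint). Then for fixed g and n, only finitely many tuples (k, h, d, M_1, ..., M_d) satisfy these conditions. -/
lemma aux_two_mul {M k : ℕ} (hd : M ∣ k) (h2 : M < k) : 2 * M ≤ k := by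
  obtain ⟨c, rfl⟩ := hd
  have hc : 2 ≤ c := by
    rcases Nat.lt_or_ge c 2 with hc | hc
    · interval_cases c <;> omega
    · exact hc
  calc 2 * M = M * 2 := by ring
  _ ≤ M * c := Nat.mul_le_mul_left M hc

lemma aux_three_mul {M k : ℕ} (hd : M ∣ k) (h2 : 2 * M < k) : 3 * M ≤ k := by
  obtain ⟨c, rfl⟩ := hd
  have hc : 3 ≤ c := by
    rcases Nat.lt_or_ge c 3 with hc | hc
    · interval_cases c <;> omega
    · exact hc
  calc 3 * M = M * 3 := by ring
  _ ≤ M * c := Nat.mul_le_mul_left M hc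

lemma aux_sigma_finite (D B : ℕ) :
    {σ : Σ d : ℕ, Fin d → ℕ | σ.1 ≤ D ∧ ∀ r, σ.2 r ≤ B}.Finite := by
  have hsub : {σ : Σ d : ℕ, Fin d → ℕ | σ.1 ≤ D ∧ ∀ r, σ.2 r ≤ B} ⊆
      ⋃ d ∈ Set.Iic D, Sigma.mk d '' {f : Fin d → ℕ | ∀ r, f r ≤ B} := by
    rintro ⟨d, f⟩ ⟨hd, hf⟩
    exact Set.mem_biUnion hd ⟨f, hf, rfl⟩
  refine Set.Finite.subset (Set.Finite.biUnion (Set.finite_Iic D) fun d _ => ?_) hsub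
  refine Set.Finite.image _ (Set.Finite.subset
    (Set.Finite.pi (fun _ : Fin d => Set.finite_Iic B)) ?_)
  intro f hf
  simp only [Set.mem_pi, Set.mem_univ, Set.mem_Iic, forall_true_left]
  exact fun r => hf r

/-- For fixed `g, n` with `2g - 1 + n > 0`, only finitely many tuples
`(k, h, d, M₁, …, M_d)` satisfy the Riemann–Hurwitz constraint
`2g - 1 + n = k(2h - 1 + n + d) - Σ_r M_r` with `M_r ∣ k`, `1 ≤ M_r < k`. -/
theorem riemann_hurwitz_finiteness (g n : ℕ) (hpos : (0 : ℤ) < 2 * g - 1 + n) :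
    { p : ℕ × ℕ × Σ d : ℕ, Fin d → ℕ |
      1 ≤ p.1 ∧
      (∀ r, p.2.2.2 r ∣ p.1 ∧ 1 ≤ p.2.2.2 r ∧ p.2.2.2 r < p.1) ∧
      (2 * (g : ℤ) - 1 + n =
        p.1 * (2 * (p.2.1 : ℤ) - 1 + n + p.2.2.1) - ∑ r, (p.2.2.2 r : ℤ)) }.Finite := by
  set B : ℕ := 6 * (2 * g + n) with hBdef
  set D : ℕ := 14 * (2 * g + n) with hDdef
  have hbig : (Set.Iic B ×ˢ (Set.Iic (g + 1) ×ˢ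
      {σ : Σ d : ℕ, Fin d → ℕ | σ.1 ≤ D ∧ ∀ r, σ.2 r ≤ B})).Finite :=
    (Set.finite_Iic B).prod ((Set.finite_Iic (g + 1)).prod (aux_sigma_finite D B))
  refine hbig.subset ?_
  rintro ⟨k, h, d, M⟩ ⟨hk1, hM, heq⟩
  simp only [Set.mem_prod, Set.mem_Iic, Set.mem_setOf_eq]
  -- basic facts
  have hk0 : (0 : ℤ) < (k : ℤ) := by exact_mod_cast hk1
  have h2M : ∀ r, 2 * M r ≤ k := fun r => aux_two_mul (hM r).1 (hM r).2.2
  have hS2 : 2 * (∑ r, (M r : ℤ)) ≤ (d : ℤ) * k := by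
    have h1 : ∀ r ∈ Finset.univ, 2 * (M r : ℤ) ≤ (k : ℤ) := fun r _ => by
      exact_mod_cast h2M r
    calc 2 * ∑ r, (M r : ℤ) = ∑ r, 2 * (M r : ℤ) := by rw [Finset.mul_sum]
    _ ≤ ∑ _r : Fin d, (k : ℤ) := Finset.sum_le_sum h1
    _ = (d : ℤ) * k := by simp [Finset.sum_const, mul_comm]
  have hS0 : (0 : ℤ) ≤ ∑ r, (M r : ℤ) :=
    Finset.sum_nonneg fun r _ => by positivity
  -- Step 1 : k ≤ 6 * (2g - 1 + n)
  have hk6 : (k : ℤ) ≤ 6 * (2 * (g : ℤ) - 1 + n) := by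
    by_cases hc : 1 ≤ 2 * (2 * (h : ℤ) - 1 + n) + d
    · nlinarith [mul_nonneg hk0.le (by linarith : (0:ℤ) ≤ 2 * (2 * (h : ℤ) - 1 + n) + d - 1),
        hS2, heq, hpos]
    · push_neg at hc
      have hcases : (h = 0 ∧ n = 0 ∧ d ≤ 2) ∨ (h = 0 ∧ n = 1 ∧ d = 0) := by omega
      rcases hcases with ⟨rfl, rfl, hd2⟩ | ⟨rfl, rfl, rfl⟩
      · interval_cases d
        · simp only [Finset.univ_eq_empty, Finset.sum_empty] at heq
          push_cast at heq ⊢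
          nlinarith [heq, hpos, hk0]
        · rw [Fin.sum_univ_one] at heq
          push_cast at heq ⊢
          have hM1 : (1 : ℤ) ≤ (M 0 : ℤ) := by exact_mod_cast (hM 0).2.1
          nlinarith [heq, hpos, hM1]
        · rw [Fin.sum_univ_two] at heq
          have hlt : M 0 + M 1 < k := by
            have h0 : (0:ℤ) < (k:ℤ) - (M 0 : ℤ) - (M 1 : ℤ) := by push_cast at heq; omega
            omega
          rcases eq_or_lt_of_le (h2M 0) with he | he
          · have h31 : 3 * M 1 ≤ k := aux_three_mul (hM 1).1 (by omega)
            push_cast at heq ⊢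
            omega
          · have h30 : 3 * M 0 ≤ k := aux_three_mul (hM 0).1 he
            have h21 : 2 * M 1 ≤ k := h2M 1
            push_cast at heq ⊢
            omega
      · simp only [Finset.univ_eq_empty, Finset.sum_empty] at heq
        push_cast at heq ⊢
        nlinarith [heq, hpos, hk0]
  have hkB : k ≤ B := by rw [hBdef]; omega
  -- Step 2 : d ≤ D
  have hdZ : (d : ℤ) ≤ 2 * (2 * (g : ℤ) - 1 + n) + 2 * k := by
    nlinarith [heq, hS2,
      mul_nonneg hk0.le (by omega : (0:ℤ) ≤ 2 * (h : ℤ) - 1 + n + 1),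
      mul_nonneg (by linarith : (0:ℤ) ≤ (k:ℤ) - 1) (by positivity : (0:ℤ) ≤ (d:ℤ))]
  have hdD : d ≤ D := by rw [hDdef]; omega
  -- Step 3 : h ≤ g + 1
  have hhg : h ≤ g + 1 := by
    rcases Nat.eq_zero_or_pos h with rfl | hh1
    · omega
    · have ht0 : (0 : ℤ) ≤ 2 * (h : ℤ) - 1 + n := by
        have : (1:ℤ) ≤ (h:ℤ) := by exact_mod_cast hh1
        linarith
      have key : 2 * (2 * (h : ℤ) - 1 + n) ≤ 2 * (2 * (g : ℤ) - 1 + n) := by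
        nlinarith [heq, hS2,
          mul_nonneg (by linarith : (0:ℤ) ≤ (k:ℤ) - 1) ht0,
          mul_nonneg hk0.le (by positivity : (0:ℤ) ≤ (d:ℤ))]
      omega
  -- Step 4 : M r ≤ B
  refine ⟨hkB, hhg, hdD, fun r => ?_⟩
  exact le_trans (le_of_lt (hM r).2.2) hkB
end

section
/- With ω_n = (−1)^{n−1}(n−3)! for n ≥ 3 (so Ω_0(y) = Σ_{n≥3} (−1)^{n−1}(n−3)! y^n/n!), the fixed-point series y_0 defined by y_0 = x + Ω_0'(y_0), y_0(0)=0, satisfies (1+y_0)log(1+y_0) = 2y_0 − x as formal power series. -/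
open PowerSeries

/-- Composition `F(y)` of formal power series, valid when `y` has zero constant term. -/
noncomputable def PowerSeries.comp (F y : PowerSeries ℚ) : PowerSeries ℚ :=
  PowerSeries.mk fun N => ∑ n ∈ Finset.range (N + 1),
    (PowerSeries.coeff n F) * (PowerSeries.coeff N (y ^ n))

/-- The formal logarithm series `log(1+t) = Σ_{n≥1} (-1)^{n+1} t^n / n`. -/
noncomputable def formalLog : PowerSeries ℚ :=
  PowerSeries.mk fun n => if n = 0 then 0 else (-1 : ℚ) ^ (n + 1) / n

/-!
Since `y` has no constant term, the truncated sum defining `F.comp y` is the substitution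
`F.subst y`, an algebra homomorphism in `F`. A coefficient computation gives
`Ω₀' = (1 + X) log(1 + X) - X`, so the fixed-point equation reads
`y = X + (1 + y) log(1 + y) - y`.
-/

namespace PowerSeries

theorem coeff_pow_eq_zero_of_lt {R : Type*} [Semiring R] {y : R⟦X⟧} (hy : constantCoeff y = 0)
    {n i : ℕ} (h : n < i) : coeff n (y ^ i) = 0 :=
  coeff_of_lt_order n <| lt_of_lt_of_le (by exact_mod_cast h)
    (le_order_pow_of_constantCoeff_eq_zero i hy)

theorem comp_eq_subst {y : ℚ⟦X⟧} (hy : constantCoeff y = 0) (F : ℚ⟦X⟧) :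
    F.comp y = F.subst y := by
  ext N
  rw [comp, coeff_mk, coeff_subst' (HasSubst.of_constantCoeff_zero' hy)]
  refine (finsum_eq_sum_of_support_subset _ fun i hi => ?_).symm
  by_contra hiN
  rw [Finset.coe_range, Set.mem_Iio, not_lt] at hiN
  exact hi (mul_eq_zero_of_right _ (coeff_pow_eq_zero_of_lt hy (Nat.lt_of_succ_le hiN)))

end PowerSeries

theorem derivative_omegaZero :
    d⁄dX ℚ (mk fun n => if 3 ≤ n then (-1 : ℚ) ^ (n - 1) * (n - 3).factorial / n.factorial
      else 0) = (1 + X) * formalLog - X := by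
  ext n
  rw [coeff_derivative, coeff_mk, add_mul, one_mul, map_sub, map_add]
  rcases n with _ | _ | m
  · simp [formalLog]
  · simp [formalLog, coeff_succ_X_mul]
  · -- `(n + 1) (n - 2)! / (n + 1)! = 1 / (n - 1) - 1 / n` for `n = m + 2`
    have hfact : ((m + 3).factorial : ℚ) = (m + 3) * (m + 2) * (m + 1) * m.factorial := by
      push_cast [Nat.factorial_succ]
      ring
    simp only [formalLog, coeff_mk, coeff_succ_X_mul, coeff_X, if_pos (by omega : 3 ≤ m + 3),
      show m + 3 - 1 = m + 2 by omega, show m + 3 - 3 = m by omega, hfact,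
      if_neg (by omega : m + 1 + 1 ≠ 0), if_neg (by omega : m + 1 ≠ 0),
      if_neg (by omega : m + 1 + 1 ≠ 1)]
    push_cast
    field_simp
    ring

/-- With `ω_n = (-1)^{n-1}(n-3)!` for `n ≥ 3`, the fixed-point series `y₀` of
`y₀ = x + Ω₀'(y₀)` satisfies `(1+y₀) log(1+y₀) = 2 y₀ - x`. -/
theorem fixed_point_satisfies_log_eq (y : PowerSeries ℚ)
    (hy0 : PowerSeries.constantCoeff y = 0)
    (Ω : PowerSeries ℚ)
    (hΩ : Ω = PowerSeries.mk fun n =>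
      if 3 ≤ n then (-1 : ℚ) ^ (n - 1) * (Nat.factorial (n - 3)) / (Nat.factorial n) else 0)
    (hfix : y = PowerSeries.X + PowerSeries.comp (PowerSeries.derivativeFun Ω) y) :
    (1 + y) * PowerSeries.comp formalLog y = 2 * y - PowerSeries.X := by
  have hy := HasSubst.of_constantCoeff_zero' hy0
  change y = X + (d⁄dX ℚ Ω).comp y at hfix
  rw [comp_eq_subst hy0, ← coe_substAlgHom hy] at hfix ⊢
  rw [hΩ, derivative_omegaZero, map_sub, map_mul, map_add, map_one, substAlgHom_X] at hfix
  linear_combination -hfix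
end
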